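/- Let $F$ be an uncountable closed subset of a bounded closed interval $[a,b] \subset \mathbb{R}$. Then there exists a perfect (nonempty, compact, without isolated points) set $K \subseteq F$ such that for every $\alpha < 1$, the function $x \mapsto (\mathrm{dist}(x,K))^{-\alpha}$ is Lebesgue integrable on $[a,b]$. -/

import Mathlib

open MeasureTheory Set

/-!
An uncountable closed set contains the image of the Cantor space `ℕ → Bool` under a continuous
injection `f`. Keeping only the sequences that vanish off a sparse set of positions
`m 0 < m 1 < ⋯` gives a perfect compact set `K` whose `n`-th generation consists of `2 ^ n`
pieces, each (by uniform continuity of `f`) within a ball of radius `r n = 2 ^ (-n²)`. So the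
`r n`-neighbourhood of `K` has measure at most `2 ^ n * 4 r n`, and on the shell
`r (n + 1) ≤ dist x K < r n` the integrand is at most `r (n + 1) ^ (-α)`. The resulting series
`∑ 2 ^ n r n r (n + 1) ^ (-α)` converges for every `α < 1` because `r` decays like `2 ^ (-n²)`.
-/

open Filter Function Metric Topology
open scoped ENNReal

theorem Continuous.exists_forall_mem_cylinder_dist_lt {X : Type*} [PseudoMetricSpace X]
    {f : (ℕ → Bool) → X} (hf : Continuous f) {ε : ℝ} (hε : 0 < ε) :
    ∃ N, ∀ ω, ∀ ω' ∈ PiNat.cylinder ω N, dist (f ω') (f ω) < ε := by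
  let : MetricSpace (ℕ → Bool) := PiNat.metricSpaceOfDiscreteUniformity fun _ => rfl
  obtain ⟨δ, hδ, hfδ⟩ := Metric.uniformContinuous_iff.1
    (CompactSpace.uniformContinuous_of_continuous hf) ε hε
  obtain ⟨N, hN⟩ := exists_pow_lt_of_lt_one hδ (by norm_num : (1 / 2 : ℝ) < 1)
  exact ⟨N, fun ω ω' hω' => hfδ ((PiNat.mem_cylinder_iff_dist_le.1 hω').trans_lt hN)⟩

theorem exists_strictMono_forall_le (N : ℕ → ℕ) : ∃ m : ℕ → ℕ, StrictMono m ∧ ∀ n, N n ≤ m n :=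
  ⟨fun n => n + ∑ j ∈ Finset.range (n + 1), N j,
    strictMono_nat_of_lt_succ fun n => by simp only [Finset.sum_range_succ]; omega,
    fun n => le_add_left (Finset.single_le_sum (fun _ _ => Nat.zero_le _)
      (Finset.self_mem_range_succ n))⟩

def cantorSupportedOn (S : Set ℕ) : Set (ℕ → Bool) := {ω | ∀ k ∉ S, ω k = false}

theorem isClosed_cantorSupportedOn (S : Set ℕ) : IsClosed (cantorSupportedOn S) := by
  simp only [cantorSupportedOn, ofPred_forall]
  exact isClosed_biInter fun k _ => isClosed_eq (continuous_apply k) continuous_const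

theorem update_mem_cantorSupportedOn {S : Set ℕ} {ω : ℕ → Bool} (hω : ω ∈ cantorSupportedOn S)
    {k : ℕ} (hk : k ∈ S) (b : Bool) : update ω k b ∈ cantorSupportedOn S := fun i hi => by
  rw [update_of_ne (ne_of_mem_of_not_mem hk hi).symm]
  exact hω i hi

theorem mem_cylinder_of_mem_cantorSupportedOn_range {m : ℕ → ℕ} (hm : StrictMono m)
    {ω ω' : ℕ → Bool} (hω : ω ∈ cantorSupportedOn (range m))
    (hω' : ω' ∈ cantorSupportedOn (range m)) {n : ℕ} (h : ∀ j < n, ω' (m j) = ω (m j)) :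
    ω' ∈ PiNat.cylinder ω (m n) := by
  intro k hk
  by_cases hkm : k ∈ range m
  · obtain ⟨j, rfl⟩ := hkm
    exact h j (hm.lt_iff_lt.1 hk)
  · rw [hω k hkm, hω' k hkm]

theorem Continuous.exists_perfect_subset_range_forall_subset_iUnion_ball {X : Type*}
    [MetricSpace X] {f : (ℕ → Bool) → X} (hf : Continuous f) (hinj : Injective f) {r : ℕ → ℝ}
    (hr : ∀ n, 0 < r n) :
    ∃ K ⊆ range f, K.Nonempty ∧ IsCompact K ∧ Perfect K ∧
      ∀ n, ∃ c : (Fin n → Bool) → X, K ⊆ ⋃ t, ball (c t) (r n) := by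
  choose N hN using fun n => hf.exists_forall_mem_cylinder_dist_lt (hr n)
  obtain ⟨m, hm, hNm⟩ := exists_strictMono_forall_le N
  set T := cantorSupportedOn (range m)
  have hT0 : (fun _ => false) ∈ T := fun _ _ => rfl
  have hTc : IsCompact (f '' T) := (isClosed_cantorSupportedOn _).isCompact.image hf
  refine ⟨f '' T, image_subset_range _ _, ⟨_, mem_image_of_mem f hT0⟩, hTc, ⟨hTc.isClosed, ?_⟩,
    fun n => ?_⟩
  · rw [preperfect_iff_nhds]
    rintro _ ⟨ω, hω, rfl⟩ U hU
    obtain ⟨ε, hε, hεU⟩ := Metric.mem_nhds_iff.1 hU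
    obtain ⟨M, hM⟩ := hf.exists_forall_mem_cylinder_dist_lt hε
    set ω' := Function.update ω (m M) (!ω (m M))
    have hne : ω' ≠ ω := fun h => by simpa [ω'] using congr_fun h (m M)
    have hω' : ω' ∈ PiNat.cylinder ω M :=
      PiNat.cylinder_anti _ (hm.id_le M) (PiNat.update_mem_cylinder _ _ _)
    exact ⟨f ω', ⟨hεU (hM ω ω' hω'),
      mem_image_of_mem f (update_mem_cantorSupportedOn hω (mem_range_self M) _)⟩, hinj.ne hne⟩
  · have hcenter : ∀ t : Fin n → Bool, ∃ c, ∀ ω ∈ T, (∀ j : Fin n, ω (m j) = t j) →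
        dist (f ω) c < r n := by
      intro t
      by_cases h : ∃ ω₀ ∈ T, ∀ j : Fin n, ω₀ (m j) = t j
      · obtain ⟨ω₀, hω₀, ht⟩ := h
        refine ⟨f ω₀, fun ω hω hωt => hN n ω₀ ω (PiNat.cylinder_anti _ (hNm n) ?_)⟩
        exact mem_cylinder_of_mem_cantorSupportedOn_range hm hω₀ hω fun j hj =>
          (hωt ⟨j, hj⟩).trans (ht ⟨j, hj⟩).symm
      · exact ⟨f (fun _ => false), fun ω hω hωt => absurd ⟨ω, hω, hωt⟩ h⟩
    choose c hc using hcenter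
    refine ⟨c, ?_⟩
    rintro _ ⟨ω, hω, rfl⟩
    exact mem_iUnion.2 ⟨fun j => ω (m j), hc _ ω hω fun j => rfl⟩

theorem exists_succ_le_lt_of_tendsto_zero {r : ℕ → ℝ} (hr : Tendsto r atTop (𝓝 0)) {d : ℝ}
    (hd : 0 < d) (hd0 : d < r 0) : ∃ n, r (n + 1) ≤ d ∧ d < r n := by
  classical
  have hex : ∃ m, r m ≤ d := ((hr.eventually (gt_mem_nhds hd)).exists).imp fun _ => le_of_lt
  have hm : Nat.find hex ≠ 0 := fun h => (h ▸ Nat.find_spec hex).not_gt hd0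
  obtain ⟨n, hn⟩ := Nat.exists_eq_add_one_of_ne_zero hm
  refine ⟨n, by rw [← hn]; exact Nat.find_spec hex, not_le.1 (Nat.find_min hex ?_)⟩
  omega

theorem integrableOn_infDist_rpow_neg_of_tsum_ne_top {X : Type*} [PseudoMetricSpace X]
    [MeasurableSpace X] [OpensMeasurableSpace X] {μ : Measure X} {K s : Set X} (hK : K.Nonempty)
    (hs : μ s ≠ ∞) {α : ℝ} (hα : 0 ≤ α) {r : ℕ → ℝ} (hr : ∀ n, 0 < r n)
    (hr0 : Tendsto r atTop (𝓝 0))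
    (hsum : ∑' n, ENNReal.ofReal (r (n + 1) ^ (-α)) * μ (thickening (r n) K) ≠ ∞) :
    IntegrableOn (fun x => infDist x K ^ (-α)) s μ := by
  set M := max 1 (r 0 ^ (-α))
  have hbound : ∀ x, ENNReal.ofReal (infDist x K ^ (-α)) ≤ ENNReal.ofReal M +
      ∑' n, (thickening (r n) K).indicator (fun _ => ENNReal.ofReal (r (n + 1) ^ (-α))) x := by
    intro x
    rcases (infDist_nonneg (x := x) (s := K)).eq_or_lt with h0 | hpos
    · refine le_add_right (ENNReal.ofReal_le_ofReal ?_)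
      rw [← h0]
      exact (Real.zero_rpow_le_one _).trans (le_max_left _ _)
    rcases le_or_gt (r 0) (infDist x K) with hfar | hnear
    · exact le_add_right (ENNReal.ofReal_le_ofReal ((Real.rpow_le_rpow_of_nonpos (hr 0) hfar
        (neg_nonpos.2 hα)).trans (le_max_right _ _)))
    obtain ⟨n, hn1, hn⟩ := exists_succ_le_lt_of_tendsto_zero hr0 hpos hnear
    calc ENNReal.ofReal (infDist x K ^ (-α)) ≤ ENNReal.ofReal (r (n + 1) ^ (-α)) :=
          ENNReal.ofReal_le_ofReal (Real.rpow_le_rpow_of_nonpos (hr _) hn1 (neg_nonpos.2 hα))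
      _ = (thickening (r n) K).indicator (fun _ => ENNReal.ofReal (r (n + 1) ^ (-α))) x :=
          (indicator_of_mem ((mem_thickening_iff_infDist_lt hK).2 hn) fun _ => _).symm
      _ ≤ _ := ENNReal.le_tsum n
      _ ≤ _ := le_add_self
  refine ⟨((continuous_infDist_pt K).measurable.pow_const _).aestronglyMeasurable, ?_⟩
  rw [hasFiniteIntegral_iff_ofReal (ae_of_all _ fun x => Real.rpow_nonneg infDist_nonneg _)]
  calc ∫⁻ x in s, ENNReal.ofReal (infDist x K ^ (-α)) ∂μ
      ≤ ∫⁻ x in s, ENNReal.ofReal M +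
          ∑' n, (thickening (r n) K).indicator (fun _ => ENNReal.ofReal (r (n + 1) ^ (-α))) x ∂μ :=
        lintegral_mono hbound
    _ = ENNReal.ofReal M * μ s +
          ∑' n, ENNReal.ofReal (r (n + 1) ^ (-α)) * μ.restrict s (thickening (r n) K) := by
        rw [lintegral_add_left measurable_const, setLIntegral_const,
          lintegral_tsum fun n => (aemeasurable_const.indicator isOpen_thickening.measurableSet)]
        simp only [lintegral_indicator_const isOpen_thickening.measurableSet]
    _ ≤ ENNReal.ofReal M * μ s +
          ∑' n, ENNReal.ofReal (r (n + 1) ^ (-α)) * μ (thickening (r n) K) := by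
        gcongr
        exact Measure.restrict_le_self
    _ < ∞ := ENNReal.add_lt_top.2 ⟨ENNReal.mul_lt_top ENNReal.ofReal_lt_top hs.lt_top, hsum.lt_top⟩

theorem Real.volume_thickening_le_of_subset_iUnion_ball {ι : Type*} [Fintype ι] {K : Set ℝ}
    {c : ι → ℝ} {r : ℝ} (hK : K ⊆ ⋃ i, ball (c i) r) :
    volume (thickening r K) ≤ Fintype.card ι * ENNReal.ofReal (4 * r) :=
  calc volume (thickening r K) ≤ volume (⋃ i, ball (c i) (r + r)) := by
        refine measure_mono ((thickening_subset_of_subset r hK).trans ?_)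
        rw [thickening_iUnion]
        exact iUnion_mono fun i => thickening_ball _ _ _
    _ ≤ ∑ i, volume (ball (c i) (r + r)) := measure_iUnion_fintype_le _ _
    _ = Fintype.card ι * ENNReal.ofReal (4 * r) := by
        simp only [Real.volume_ball, Finset.sum_const, Finset.card_univ, nsmul_eq_mul]
        ring_nf

noncomputable def rapidRadius (n : ℕ) : ℝ := 2 ^ (-(n : ℝ) ^ 2)

theorem rapidRadius_pos (n : ℕ) : 0 < rapidRadius n := Real.rpow_pos_of_pos two_pos _

theorem tendsto_rapidRadius_atTop : Tendsto rapidRadius atTop (𝓝 0) :=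
  (tendsto_rpow_atBot_of_base_gt_one 2 one_lt_two).comp <| tendsto_neg_atTop_atBot.comp <|
    (tendsto_pow_atTop two_ne_zero).comp tendsto_natCast_atTop_atTop

theorem summable_rapidRadius {α : ℝ} (hα : α < 1) :
    Summable fun n : ℕ => rapidRadius (n + 1) ^ (-α) * (2 ^ n * (4 * rapidRadius n)) := by
  have hterm : ∀ n : ℕ, rapidRadius (n + 1) ^ (-α) * (2 ^ n * (4 * rapidRadius n)) =
      4 * 2 ^ (α * ((n : ℝ) + 1) ^ 2 + ((n : ℝ) + -(n : ℝ) ^ 2)) := by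
    intro n
    rw [rapidRadius, rapidRadius, ← Real.rpow_mul zero_le_two, ← Real.rpow_natCast 2 n,
      Real.rpow_add two_pos, Real.rpow_add two_pos]
    push_cast
    ring_nf
  obtain ⟨N, hN⟩ := exists_nat_ge ((2 * α + 3) / (1 - α))
  refine .of_norm_bounded_eventually_nat (summable_geometric_two.mul_left 4) ?_
  filter_upwards [eventually_ge_atTop (max N 1)] with n hn
  have hn1 : (1 : ℝ) ≤ n := by exact_mod_cast le_of_max_le_right hn
  have hnN : (2 * α + 3) / (1 - α) ≤ n := hN.trans (by exact_mod_cast le_of_max_le_left hn)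
  rw [div_le_iff₀ (by linarith)] at hnN
  rw [hterm, Real.norm_of_nonneg (by positivity), one_div, inv_pow, ← Real.rpow_natCast 2 n,
    ← Real.rpow_neg zero_le_two]
  gcongr
  · exact one_le_two
  · nlinarith

theorem tsum_rapidRadius_ne_top {α : ℝ} (hα : α < 1) :
    ∑' n : ℕ, ENNReal.ofReal (rapidRadius (n + 1) ^ (-α)) *
      (2 ^ n * ENNReal.ofReal (4 * rapidRadius n)) ≠ ∞ := by
  have hterm : ∀ n : ℕ, ENNReal.ofReal (rapidRadius (n + 1) ^ (-α)) *
      (2 ^ n * ENNReal.ofReal (4 * rapidRadius n)) =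
      ENNReal.ofReal (rapidRadius (n + 1) ^ (-α) * (2 ^ n * (4 * rapidRadius n))) := fun n => by
    rw [ENNReal.ofReal_mul (Real.rpow_nonneg (rapidRadius_pos _).le _),
      ENNReal.ofReal_mul (by positivity : (0 : ℝ) ≤ 2 ^ n), ENNReal.ofReal_pow zero_le_two,
      ENNReal.ofReal_ofNat]
  simp only [hterm]
  rw [← ENNReal.ofReal_tsum_of_nonneg (fun n => by unfold rapidRadius; positivity)
    (summable_rapidRadius hα)]
  exact ENNReal.ofReal_ne_top

theorem stmt_0 (a b : ℝ) (F : Set ℝ) (hFclosed : IsClosed F) (hFunc : ¬ F.Countable) :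
    ∃ K : Set ℝ, K ⊆ F ∧ K.Nonempty ∧ IsCompact K ∧ Perfect K ∧
      ∀ α : ℝ, α < 1 →
        IntegrableOn (fun x : ℝ => (Metric.infDist x K) ^ (-α)) (Icc a b) volume := by
  obtain ⟨f, hfF, hf, hinj⟩ := hFclosed.exists_nat_bool_injection_of_not_countable hFunc
  obtain ⟨K, hKf, hKne, hKc, hKp, hcover⟩ :=
    hf.exists_perfect_subset_range_forall_subset_iUnion_ball hinj rapidRadius_pos
  refine ⟨K, hKf.trans hfF, hKne, hKc, hKp, fun α hα => ?_⟩
  rcases lt_or_ge α 0 with hα0 | hα0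
  · exact ((continuous_infDist_pt K).rpow_const fun _ => Or.inr (by linarith)).integrableOn_Icc
  have hvol : ∀ n, volume (thickening (rapidRadius n) K) ≤
      2 ^ n * ENNReal.ofReal (4 * rapidRadius n) := fun n => by
    obtain ⟨c, hc⟩ := hcover n
    simpa using Real.volume_thickening_le_of_subset_iUnion_ball hc
  exact integrableOn_infDist_rpow_neg_of_tsum_ne_top hKne measure_Icc_lt_top.ne hα0 rapidRadius_pos
    tendsto_rapidRadius_atTop <| ne_top_of_le_ne_top (tsum_rapidRadius_ne_top hα)
      (ENNReal.tsum_le_tsum fun n => by gcongr; exact hvol n)
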